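/- Let f : ℝ → ℂ be 2π-periodic and twice continuously differentiable, and let t ∈ ℝ. Then the principal value integral of the cotangent kernel against f′ equals minus the (absolutely convergent) integral of the logarithmic kernel against f″: lim_{ε→0⁺} ∫_{{s ∈ [−π,π] : ε ≤ |s|}} cot(s/2) f′(t+s) ds = −∫_{−π}^{π} ln(4 sin²(s/2)) f″(t+s) ds. -/

import Mathlib

open MeasureTheory Filter intervalIntegral Real Set


-- derivative of the log kernel
lemma hasDerivAt_logker {s : ℝ} (hs : Real.sin (s/2) ≠ 0) :
    HasDerivAt (fun x : ℝ => Real.log (4 * Real.sin (x/2)^2)) (Real.cot (s/2)) s := by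
  have h1 : HasDerivAt (fun x : ℝ => x/2) (1/2) s := by
    simpa using (hasDerivAt_id s).div_const 2
  have h2 : HasDerivAt (fun x : ℝ => Real.sin (x/2)) (Real.cos (s/2) * (1/2)) s :=
    by have := (Real.hasDerivAt_sin (s/2)).comp s h1; exact this
  have h3 : HasDerivAt (fun x : ℝ => 4 * Real.sin (x/2)^2)
      (4 * (Real.cos (s/2) * 2⁻¹ * Real.sin (s/2) + Real.sin (s/2) * (Real.cos (s/2) * 2⁻¹))) s := by
    simpa [pow_two] using ((h2.mul h2).const_mul 4)
  have h4 : (4 : ℝ) * Real.sin (s/2)^2 ≠ 0 := by positivity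
  have h5 := (Real.hasDerivAt_log h4).comp s h3
  refine HasDerivAt.congr_deriv h5 ?_
  rw [Real.cot_eq_cos_div_sin]
  field_simp
  ring


lemma abs_rpow_ii : IntervalIntegrable (fun s : ℝ => |s| ^ (-(1/2):ℝ)) volume (-π) π := by
  have h0 : ∀ c : ℝ, 0 ≤ c → IntervalIntegrable (fun s : ℝ => |s| ^ (-(1/2):ℝ)) volume 0 c := by
    intro c hc
    have := intervalIntegrable_rpow' (a := 0) (b := c)
      (r := (-(1/2) : ℝ)) (by norm_num)
    rw [intervalIntegrable_iff, uIoc_of_le hc] at this ⊢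
    refine this.congr_fun ?_ measurableSet_Ioc
    intro x hx
    simp only []
    rw [abs_of_pos hx.1]
  have hpos := h0 π Real.pi_pos.le
  have hneg : IntervalIntegrable (fun s : ℝ => |s| ^ (-(1/2):ℝ)) volume (-π) 0 := by
    rw [IntervalIntegrable.iff_comp_neg]
    simpa [abs_neg] using hpos.symm
  exact hneg.trans hpos

lemma ae_ne_zero_restrict (s : Set ℝ) : ∀ᵐ x ∂(volume.restrict s), x ≠ (0:ℝ) := by
  refine ae_restrict_of_ae ?_
  rw [ae_iff]
  have : {x : ℝ | ¬ x ≠ 0} = {0} := by ext x; simp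
  rw [this]
  exact Real.volume_singleton

lemma logabs_le (a : ℝ) (ha : 0 < a) (ha' : a ≤ π) : |Real.log a| ≤ 5 * a ^ (-(1/2):ℝ) := by
  have hrp : (0:ℝ) < a ^ (-(1/2):ℝ) := Real.rpow_pos_of_pos ha _
  rcases le_or_gt a 1 with h1 | h1
  · have h2 : |Real.log a| = Real.log a⁻¹ := by
      rw [Real.log_inv, abs_of_nonpos (Real.log_nonpos ha.le h1)]
    have h3 : Real.log a⁻¹ = 2 * Real.log (a ^ (-(1/2):ℝ)) := by
      rw [Real.log_rpow ha]
      rw [Real.log_inv]; ring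
    have h4 : Real.log (a ^ (-(1/2):ℝ)) ≤ a ^ (-(1/2):ℝ) - 1 :=
      Real.log_le_sub_one_of_pos hrp
    rw [h2, h3]
    nlinarith
  · have h2 : |Real.log a| = Real.log a := abs_of_nonneg (Real.log_nonneg h1.le)
    have h3 : Real.log a ≤ a - 1 := Real.log_le_sub_one_of_pos ha
    have h5 : (1/2 : ℝ) ≤ a ^ (-(1/2):ℝ) := by
      have hs1 : a ^ ((1/2):ℝ) ≤ (4:ℝ) ^ ((1/2):ℝ) :=
        Real.rpow_le_rpow ha.le (by nlinarith [Real.pi_lt_d2]) (by norm_num)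
      have hs2 : (4:ℝ) ^ ((1/2):ℝ) = 2 := by
        rw [← Real.sqrt_eq_rpow, show (4:ℝ) = 2^2 by norm_num, Real.sqrt_sq (by norm_num)]
      have hs3 : a ^ (-(1/2):ℝ) = (a ^ ((1/2):ℝ))⁻¹ := by
        rw [← Real.rpow_neg ha.le]
      rw [hs3]
      rw [hs2] at hs1
      have hposr : (0:ℝ) < a ^ ((1/2):ℝ) := Real.rpow_pos_of_pos ha _
      have : ((2:ℝ))⁻¹ ≤ (a ^ ((1/2):ℝ))⁻¹ := by
        apply inv_anti₀ hposr hs1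
      linarith
    rw [h2]
    nlinarith [Real.pi_lt_d2]


lemma logabs_integrableOn : IntegrableOn (fun s : ℝ => Real.log |s|) (Icc (-π) π) volume := by
  have hDi : IntegrableOn (fun s : ℝ => 5 * |s| ^ (-(1/2):ℝ)) (Icc (-π) π) volume := by
    rw [integrableOn_Icc_iff_integrableOn_Ioc]
    have h := abs_rpow_ii.const_mul 5
    rw [intervalIntegrable_iff, uIoc_of_le (by linarith [Real.pi_pos] : (-π:ℝ) ≤ π)] at h
    exact h
  refine Integrable.mono' hDi ?_ ?_
  · exact ((Real.measurable_log.comp measurable_abs)).aestronglyMeasurable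
  · filter_upwards [ae_ne_zero_restrict (Icc (-π) π), ae_restrict_mem measurableSet_Icc]
      with s hs hmem
    rw [Real.norm_eq_abs]
    exact logabs_le |s| (abs_pos.2 hs) (abs_le.mpr ⟨hmem.1, hmem.2⟩)

lemma logker_bound {s : ℝ} (hmem : s ∈ Icc (-π) π) (hs : s ≠ 0) :
    |Real.log (4 * Real.sin (s/2)^2)| ≤ 4 + 2 * |Real.log (|s|)| := by
  set a := |s| with ha_def
  have ha : 0 < a := abs_pos.2 hs
  have ha' : a ≤ π := abs_le.mpr ⟨hmem.1, hmem.2⟩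
  have hsq : Real.sin (s/2)^2 = Real.sin (a/2)^2 := by
    rcases abs_cases s with ⟨h, _⟩ | ⟨h, _⟩
    · rw [ha_def, h]
    · rw [ha_def, h, neg_div, Real.sin_neg, neg_sq]
  have hlow : a/π ≤ Real.sin (a/2) := by
    have := Real.mul_le_sin (x := a/2) (by positivity) (by linarith)
    have hpi := Real.pi_pos
    calc a/π = 2/π * (a/2) := by field_simp
    _ ≤ Real.sin (a/2) := this
  have hup : Real.sin (a/2) ≤ a/2 := Real.sin_le (by positivity)
  have hpi := Real.pi_pos
  have hsinpos : 0 < Real.sin (a/2) := lt_of_lt_of_le (by positivity) hlow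
  have hxpos : (0:ℝ) < 4 * Real.sin (a/2)^2 := by positivity
  have hxup : 4 * Real.sin (a/2)^2 ≤ a^2 := by nlinarith
  have hxlow : (a/(π/2))^2 ≤ 4 * Real.sin (a/2)^2 := by
    have h1 : (a/(π/2))^2 = 4 * (a/π)^2 := by field_simp; ring
    have h2 := mul_self_le_mul_self (by positivity : (0:ℝ) ≤ a/π) hlow
    nlinarith
  have hlogup : Real.log (4 * Real.sin (a/2)^2) ≤ 2 * Real.log a := by
    have := Real.log_le_log hxpos hxup
    rwa [show a^2 = a^(2:ℕ) by norm_num, Real.log_pow, Nat.cast_ofNat] at this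
  have hloglow : 2 * (Real.log a - Real.log (π/2)) ≤ Real.log (4 * Real.sin (a/2)^2) := by
    have h2 : (0:ℝ) < (a/(π/2))^2 := by positivity
    have := Real.log_le_log h2 hxlow
    rwa [show (a/(π/2))^2 = (a/(π/2))^(2:ℕ) by norm_num, Real.log_pow,
      Real.log_div ha.ne' (by positivity), Nat.cast_ofNat] at this
  have hpi2a : Real.log (π/2) ≤ 2 := by
    have := Real.log_le_sub_one_of_pos (show (0:ℝ) < π/2 by positivity)
    nlinarith [Real.pi_lt_d2]
  have hpi2b : 0 ≤ Real.log (π/2) := Real.log_nonneg (by nlinarith [Real.pi_gt_three])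
  rw [hsq]
  rw [abs_le]
  constructor
  · nlinarith [neg_abs_le (Real.log a)]
  · nlinarith [le_abs_self (Real.log a)]

lemma logker_integrableOn :
    IntegrableOn (fun s : ℝ => Real.log (4 * Real.sin (s/2)^2)) (Icc (-π) π) volume := by
  have hD : IntegrableOn (fun s : ℝ => 4 + 2 * |Real.log (|s|)|) (Icc (-π) π) volume := by
    apply Integrable.add
    · exact integrableOn_const measure_Icc_lt_top.ne
    · exact (logabs_integrableOn.abs).const_mul 2
  refine Integrable.mono' hD ?_ ?_
  · refine (Real.measurable_log.comp ?_).aestronglyMeasurable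
    exact (measurable_const.mul ((Real.measurable_sin.comp (measurable_id.div_const 2)).pow_const 2))
  · filter_upwards [ae_ne_zero_restrict (Icc (-π) π), ae_restrict_mem measurableSet_Icc]
      with s hs hmem
    rw [Real.norm_eq_abs]
    exact logker_bound hmem hs


theorem stmt6 (f : ℝ → ℂ) (hper : Function.Periodic f (2 * Real.pi))
    (hf : ContDiff ℝ 2 f) (t : ℝ) :
    Tendsto
      (fun ε : ℝ =>
        ∫ s in {s : ℝ | s ∈ Set.Icc (-Real.pi) Real.pi ∧ ε ≤ |s|},
          (Real.cot (s / 2) : ℂ) * deriv f (t + s))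
      (nhdsWithin 0 (Set.Ioi 0))
      (nhds (-∫ s in (-Real.pi)..Real.pi,
        (Real.log (4 * Real.sin (s / 2) ^ 2) : ℂ) * deriv (deriv f) (t + s))) := by
  have hpi := Real.pi_pos
  -- smoothness facts
  have hdf0 : Differentiable ℝ f := hf.differentiable (by norm_num)
  have hf1 : ContDiff ℝ 1 (deriv f) := by
    rw [show (2 : WithTop ℕ∞) = 1 + 1 by norm_num, contDiff_succ_iff_deriv] at hf
    exact hf.2.2
  have hdf : Differentiable ℝ (deriv f) := hf1.differentiable (by norm_num)
  have hcdd : Continuous (deriv (deriv f)) := (contDiff_one_iff_deriv.mp hf1).2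
  -- periodicity of deriv f
  have hper' : Function.Periodic (deriv f) (2 * Real.pi) := by
    intro x
    have h1 : deriv (fun y => f (y + 2*Real.pi)) x = deriv f (x + 2*Real.pi) :=
      deriv_comp_add_const _ _ _
    have h2 : (fun y => f (y + 2*Real.pi)) = f := funext hper
    rw [h2] at h1
    exact h1.symm
  -- continuity facts
  have hch : Continuous (fun s : ℝ => deriv f (t + s)) :=
    hdf.continuous.comp (continuous_const.add continuous_id)
  have hch2 : Continuous (fun s : ℝ => deriv (deriv f) (t + s)) :=
    hcdd.comp (continuous_const.add continuous_id)
  -- derivative of translated deriv f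
  have hv : ∀ x : ℝ, HasDerivAt (fun s : ℝ => deriv f (t + s)) (deriv (deriv f) (t + x)) x := by
    intro x
    exact HasDerivAt.comp_const_add t x (hdf (t + x)).hasDerivAt
  -- sine nonvanishing
  have hsin : ∀ x : ℝ, x ≠ 0 → x ∈ Icc (-π) π → Real.sin (x/2) ≠ 0 := by
    intro x hx hmem h
    apply hx
    have h1 : -π < x/2 := by linarith [hmem.1]
    have h2 : x/2 < π := by linarith [hmem.2]
    have := (Real.sin_eq_zero_iff_of_lt_of_lt h1 h2).mp h
    linarith
  -- complex log kernel
  set g : ℝ → ℂ := fun s => ((Real.log (4 * Real.sin (s/2)^2) : ℝ) : ℂ) with hg_def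
  -- integrability of g * second derivative on Icc
  have hgC : IntegrableOn g (Icc (-π) π) volume := MeasureTheory.Integrable.ofReal logker_integrableOn
  have hGI : IntegrableOn (fun s : ℝ => g s * deriv (deriv f) (t + s)) (Icc (-π) π) volume :=
    hgC.mul_continuousOn hch2.continuousOn isCompact_Icc
  have hII : ∀ a b : ℝ, a ∈ Icc (-π) π → b ∈ Icc (-π) π →
      IntervalIntegrable (fun s : ℝ => g s * deriv (deriv f) (t + s)) volume a b := by
    intro a b ha hb
    apply IntegrableOn.intervalIntegrable
    apply hGI.mono_set
    exact uIcc_subset_Icc ha hb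
  -- primitive
  set F : ℝ → ℂ := fun x => ∫ s in (-π)..x, g s * deriv (deriv f) (t + s) with hF_def
  have hFcont : ContinuousOn F (Icc (-π) π) := by
    have := continuousOn_primitive_interval (a := -π) (b := π) (μ := volume)
      (f := fun s : ℝ => g s * deriv (deriv f) (t + s))
      (by rwa [uIcc_of_le (by linarith : (-π:ℝ) ≤ π)])
    rwa [uIcc_of_le (by linarith : (-π:ℝ) ≤ π)] at this
  -- integration by parts on an interval avoiding 0
  have parts : ∀ a b : ℝ, (∀ x ∈ uIcc a b, Real.sin (x/2) ≠ 0) → a ∈ Icc (-π) π →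
      b ∈ Icc (-π) π →
      ∫ s in a..b, (Real.cot (s/2) : ℂ) * deriv f (t + s)
        = g b * deriv f (t + b) - g a * deriv f (t + a)
          - ∫ s in a..b, g s * deriv (deriv f) (t + s) := by
    intro a b hab ha hb
    have hu : ∀ x ∈ uIcc a b, HasDerivAt g ((Real.cot (x/2) : ℂ)) x := fun x hx =>
      (hasDerivAt_logker (hab x hx)).ofReal_comp
    have hv' : ∀ x ∈ uIcc a b, HasDerivAt (fun s : ℝ => deriv f (t + s))
        (deriv (deriv f) (t + x)) x := fun x _ => hv x
    have hu' : IntervalIntegrable (fun x : ℝ => (Real.cot (x/2) : ℂ)) volume a b := by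
      apply ContinuousOn.intervalIntegrable
      apply Complex.continuous_ofReal.comp_continuousOn
      have hcont : ContinuousOn (fun x : ℝ => Real.cos (x/2) / Real.sin (x/2)) (uIcc a b) := by
        apply ContinuousOn.div
        · exact (Real.continuous_cos.comp (continuous_id.div_const 2)).continuousOn
        · exact (Real.continuous_sin.comp (continuous_id.div_const 2)).continuousOn
        · exact hab
      exact hcont.congr fun x _ => Real.cot_eq_cos_div_sin _
    have hw' : IntervalIntegrable (fun x : ℝ => deriv (deriv f) (t + x)) volume a b :=
      hch2.intervalIntegrable a b
    have hparts := intervalIntegral.integral_mul_deriv_eq_deriv_mul hu hv' hu' hw'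
    rw [hparts]; ring
  -- value of g at ±π, evenness, periodic endpoint values
  have hgpi : g π = ((Real.log 4 : ℝ) : ℂ) := by
    simp [hg_def, Real.sin_pi_div_two]
  have hgnegpi : g (-π) = ((Real.log 4 : ℝ) : ℂ) := by
    simp [hg_def, neg_div, Real.sin_pi_div_two]
  have hgeven : ∀ x : ℝ, g (-x) = g x := by
    intro x
    simp [hg_def, neg_div, Real.sin_neg]
  have hhper : deriv f (t + π) = deriv f (t + -π) := by
    have := hper' (t + -π)
    rw [← this]; ring_nf
  -- key identity for ε ∈ Ioo 0 π
  have key : ∀ ε ∈ Ioo (0:ℝ) π,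
      (∫ s in {s : ℝ | s ∈ Icc (-π) π ∧ ε ≤ |s|},
          (Real.cot (s / 2) : ℂ) * deriv f (t + s))
        = g ε * (deriv f (t + -ε) - deriv f (t + ε))
          - ((F (-ε) - F (-π)) + (F π - F ε)) := by
    intro ε hε
    have hεIcc : ε ∈ Icc (-π) π := ⟨by linarith [hε.1], hε.2.le⟩
    have hnegεIcc : -ε ∈ Icc (-π) π := ⟨by linarith [hε.2], by linarith [hε.1]⟩
    have hπIcc : π ∈ Icc (-π) π := ⟨by linarith, le_refl _⟩
    have hnegπIcc : -π ∈ Icc (-π) π := ⟨le_refl _, by linarith⟩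
    have hset : {s : ℝ | s ∈ Icc (-π) π ∧ ε ≤ |s|} = Icc (-π) (-ε) ∪ Icc ε π := by
      ext x
      simp only [mem_setOf_eq, mem_Icc, mem_union, le_abs]
      constructor
      · rintro ⟨⟨h1, h2⟩, h3 | h3⟩
        · right; exact ⟨h3, h2⟩
        · left; exact ⟨h1, by linarith⟩
      · rintro (⟨h1, h2⟩ | ⟨h1, h2⟩)
        · exact ⟨⟨h1, by linarith [hε.1, hε.2]⟩, Or.inr (by linarith)⟩
        · exact ⟨⟨by linarith [hε.1], h2⟩, Or.inl h1⟩
    have hsinneg : ∀ x ∈ uIcc (-π) (-ε), Real.sin (x/2) ≠ 0 := by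
      intro x hx
      rw [uIcc_of_le (by linarith [hε.1, hε.2] : (-π:ℝ) ≤ -ε)] at hx
      exact hsin x (by intro h; rw [h] at hx; linarith [hx.2, hε.1])
        ⟨hx.1, by linarith [hx.2, hε.1]⟩
    have hsinpos : ∀ x ∈ uIcc ε π, Real.sin (x/2) ≠ 0 := by
      intro x hx
      rw [uIcc_of_le hε.2.le] at hx
      exact hsin x (by intro h; rw [h] at hx; linarith [hx.1, hε.1])
        ⟨by linarith [hx.1, hε.1], hx.2⟩
    have hdisj : Disjoint (Icc (-π) (-ε)) (Icc ε π) := by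
      apply Set.disjoint_left.mpr
      intro x hx1 hx2
      linarith [hx1.2, hx2.1, hε.1]
    have hcont1 : ContinuousOn (fun s : ℝ => (Real.cot (s/2) : ℂ) * deriv f (t + s))
        (Icc (-π) (-ε)) := by
      apply ContinuousOn.mul _ hch.continuousOn
      apply Complex.continuous_ofReal.comp_continuousOn
      have hcont : ContinuousOn (fun x : ℝ => Real.cos (x/2) / Real.sin (x/2))
          (Icc (-π) (-ε)) := by
        apply ContinuousOn.div
        · exact (Real.continuous_cos.comp (continuous_id.div_const 2)).continuousOn
        · exact (Real.continuous_sin.comp (continuous_id.div_const 2)).continuousOn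
        · intro x hx
          exact hsinneg x (by rwa [uIcc_of_le (by linarith [hε.1, hε.2] : (-π:ℝ) ≤ -ε)])
      exact hcont.congr fun x _ => Real.cot_eq_cos_div_sin _
    have hcont2 : ContinuousOn (fun s : ℝ => (Real.cot (s/2) : ℂ) * deriv f (t + s))
        (Icc ε π) := by
      apply ContinuousOn.mul _ hch.continuousOn
      apply Complex.continuous_ofReal.comp_continuousOn
      have hcont : ContinuousOn (fun x : ℝ => Real.cos (x/2) / Real.sin (x/2)) (Icc ε π) := by
        apply ContinuousOn.div
        · exact (Real.continuous_cos.comp (continuous_id.div_const 2)).continuousOn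
        · exact (Real.continuous_sin.comp (continuous_id.div_const 2)).continuousOn
        · intro x hx
          exact hsinpos x (by rwa [uIcc_of_le hε.2.le])
      exact hcont.congr fun x _ => Real.cot_eq_cos_div_sin _
    rw [hset, setIntegral_union hdisj measurableSet_Icc
      (hcont1.integrableOn_compact isCompact_Icc) (hcont2.integrableOn_compact isCompact_Icc)]
    rw [integral_Icc_eq_integral_Ioc, integral_Icc_eq_integral_Ioc,
      ← intervalIntegral.integral_of_le (by linarith [hε.1, hε.2] : (-π:ℝ) ≤ -ε),
      ← intervalIntegral.integral_of_le hε.2.le]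
    rw [parts (-π) (-ε) hsinneg hnegπIcc hnegεIcc, parts ε π hsinpos hεIcc hπIcc]
    have hFa : ∫ s in (-π:ℝ)..(-ε), g s * deriv (deriv f) (t + s) = F (-ε) - F (-π) := by
      simp only [hF_def, intervalIntegral.integral_same, sub_zero]
    have hFb : ∫ s in ε..π, g s * deriv (deriv f) (t + s) = F π - F ε :=
      (intervalIntegral.integral_interval_sub_left (hII (-π) π hnegπIcc hπIcc)
        (hII (-π) ε hnegπIcc hεIcc)).symm
    rw [hFa, hFb, hgpi, hgnegpi, hgeven ε, hhper]
    ring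
  -- now the limit computations
  have hIoo : Ioo (0:ℝ) π ∈ nhdsWithin (0:ℝ) (Set.Ioi 0) :=
    Ioo_mem_nhdsGT_of_mem ⟨le_refl 0, hpi⟩
  have h0Icc : (0:ℝ) ∈ Icc (-π) π := ⟨by linarith, by linarith⟩
  have hmappos : Tendsto (fun ε : ℝ => ε) (nhdsWithin 0 (Set.Ioi 0))
      (nhdsWithin 0 (Icc (-π) π)) := by
    refine tendsto_nhdsWithin_of_tendsto_nhds_of_eventually_within _
      (tendsto_id.mono_left nhdsWithin_le_nhds) ?_
    filter_upwards [hIoo] with x hx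
    exact ⟨by linarith [hx.1], hx.2.le⟩
  have hmapneg : Tendsto (fun ε : ℝ => -ε) (nhdsWithin 0 (Set.Ioi 0))
      (nhdsWithin 0 (Icc (-π) π)) := by
    refine tendsto_nhdsWithin_of_tendsto_nhds_of_eventually_within _
      (by simpa using (tendsto_id.mono_left
        (nhdsWithin_le_nhds : nhdsWithin (0:ℝ) (Set.Ioi 0) ≤ _)).neg) ?_
    filter_upwards [hIoo] with x hx
    exact ⟨by linarith [hx.2], by linarith [hx.1]⟩
  have hF0 : ContinuousWithinAt F (Icc (-π) π) 0 := hFcont 0 h0Icc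
  have hFpos : Tendsto (fun ε : ℝ => F ε) (nhdsWithin 0 (Set.Ioi 0)) (nhds (F 0)) :=
    hF0.tendsto.comp hmappos
  have hFneg : Tendsto (fun ε : ℝ => F (-ε)) (nhdsWithin 0 (Set.Ioi 0)) (nhds (F 0)) :=
    hF0.tendsto.comp hmapneg
  -- boundary term tends to zero
  obtain ⟨M, hM⟩ := isCompact_Icc.exists_bound_of_continuousOn
    (s := Icc (-π) π) hch2.continuousOn
  have hM0 : 0 ≤ M := le_trans (norm_nonneg _) (hM 0 h0Icc)
  have hB1 : Tendsto (fun ε : ℝ => g ε * (deriv f (t + -ε) - deriv f (t + ε)))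
      (nhdsWithin 0 (Set.Ioi 0)) (nhds 0) := by
    apply squeeze_zero_norm' (a := fun ε : ℝ => 8*M*ε + 4*M*(|Real.log ε| * ε))
    · filter_upwards [hIoo] with ε hε
      have hδ : ‖deriv f (t + -ε) - deriv f (t + ε)‖ ≤ M * (2*ε) := by
        have hFTC : ∫ s in (-ε)..ε, deriv (deriv f) (t+s)
            = deriv f (t+ε) - deriv f (t+-ε) :=
          intervalIntegral.integral_eq_sub_of_hasDerivAt (fun x _ => hv x)
            (hch2.intervalIntegrable _ _)
        have hnorm := intervalIntegral.norm_integral_le_of_norm_le_const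
            (C := M) (a := -ε) (b := ε) (f := fun s : ℝ => deriv (deriv f) (t+s)) ?_
        · rw [hFTC] at hnorm
          calc ‖deriv f (t + -ε) - deriv f (t + ε)‖
              = ‖deriv f (t+ε) - deriv f (t+-ε)‖ := by rw [norm_sub_rev]
          _ ≤ M * |ε - (-ε)| := hnorm
          _ = M * (2*ε) := by rw [abs_of_pos (by linarith [hε.1] : (0:ℝ) < ε - -ε)]; ring
        · intro x hx
          rw [Set.uIoc_of_le (by linarith [hε.1] : (-ε:ℝ) ≤ ε)] at hx
          exact hM x ⟨by linarith [hx.1, hε.2], by linarith [hx.2, hε.2]⟩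
      have hgb : ‖g ε‖ ≤ 4 + 2*|Real.log ε| := by
        have := logker_bound (s := ε) ⟨by linarith [hε.1], hε.2.le⟩ (ne_of_gt hε.1)
        rw [abs_of_pos hε.1] at this
        simpa [hg_def, Complex.norm_real, Real.norm_eq_abs] using this
      calc ‖g ε * (deriv f (t + -ε) - deriv f (t + ε))‖
          = ‖g ε‖ * ‖deriv f (t + -ε) - deriv f (t + ε)‖ := norm_mul _ _
      _ ≤ (4 + 2*|Real.log ε|) * (M*(2*ε)) :=
          mul_le_mul hgb hδ (norm_nonneg _) (by positivity)
      _ = 8*M*ε + 4*M*(|Real.log ε| * ε) := by ring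
    · have t1 : Tendsto (fun ε : ℝ => Real.log ε * ε) (nhdsWithin 0 (Set.Ioi 0)) (nhds 0) := by
        simpa [Real.rpow_one] using tendsto_log_mul_rpow_nhdsGT_zero one_pos
      have t2 : Tendsto (fun ε : ℝ => |Real.log ε * ε|) (nhdsWithin 0 (Set.Ioi 0))
          (nhds 0) := by simpa using t1.abs
      have t3 : Tendsto (fun ε : ℝ => |Real.log ε| * ε) (nhdsWithin 0 (Set.Ioi 0))
          (nhds 0) := by
        refine Tendsto.congr' ?_ t2
        filter_upwards [self_mem_nhdsWithin] with x hx
        rw [abs_mul, abs_of_pos (show (0:ℝ) < x from hx)]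
      have t4 : Tendsto (fun ε : ℝ => ε) (nhdsWithin 0 (Set.Ioi 0)) (nhds 0) :=
        tendsto_id.mono_left nhdsWithin_le_nhds
      have := (t4.const_mul (8*M)).add (t3.const_mul (4*M))
      simpa [mul_assoc] using this
  have hFm : F (-π) = 0 := intervalIntegral.integral_same
  have hΦ : Tendsto (fun ε : ℝ => g ε * (deriv f (t + -ε) - deriv f (t + ε))
        - ((F (-ε) - F (-π)) + (F π - F ε)))
      (nhdsWithin 0 (Set.Ioi 0)) (nhds (0 - ((F 0 - F (-π)) + (F π - F 0)))) :=
    hB1.sub (((hFneg.sub tendsto_const_nhds)).add (tendsto_const_nhds.sub hFpos))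
  have heq : (fun ε : ℝ => g ε * (deriv f (t + -ε) - deriv f (t + ε))
        - ((F (-ε) - F (-π)) + (F π - F ε)))
      =ᶠ[nhdsWithin (0:ℝ) (Set.Ioi 0)]
      (fun ε : ℝ => ∫ s in {s : ℝ | s ∈ Icc (-π) π ∧ ε ≤ |s|},
        (Real.cot (s / 2) : ℂ) * deriv f (t + s)) := by
    filter_upwards [hIoo] with ε hε
    exact (key ε hε).symm
  have final := hΦ.congr' heq
  convert final using 2
  rw [hFm, hF_def]
  simp only []
  ring
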